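/- arXiv:1707.06845 — 2 statements merged into one kernel-verified Lean document; each statement's English description precedes it below -/
import Mathlib

section
/- For every random variable X ∈ 𝓛_Q, ϱ_Q[X] = ∫_{(0,∞)} (1 − D(F_X(x))) dλ(x) − ∫_{(−∞,0)} D(F_X(x)) dλ(x), where λ is Lebesgue measure (the first integral is finite and the identity holds in [−∞,∞)). -/
open MeasureTheory

/-- The distribution function `F_X(x) = P[X ≤ x]` of a random variable `X`. -/
noncomputable def distFun {Ω : Type*} [MeasurableSpace Ω] (P : Measure Ω) (X : Ω → ℝ) (x : ℝ) : ℝ :=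
  (P {ω | X ω ≤ x}).toReal

/-- The (lower) quantile function `F^←_X(u) = inf {x | F_X(x) ≥ u}`. -/
noncomputable def quantile {Ω : Type*} [MeasurableSpace Ω] (P : Measure Ω) (X : Ω → ℝ) (u : ℝ) : ℝ :=
  sInf {x : ℝ | u ≤ distFun P X x}

/-- A distortion function: an increasing, right-continuous `D : [0,1] → [0,1]`
with `D 0 = 0` and `sup_{u ∈ (0,1)} D u = 1`. -/
structure IsDistortion (D : ℝ → ℝ) : Prop where
  mapsTo : ∀ u ∈ Set.Icc (0:ℝ) 1, D u ∈ Set.Icc (0:ℝ) 1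
  mono : ∀ ⦃a b : ℝ⦄, 0 ≤ a → a ≤ b → b ≤ 1 → D a ≤ D b
  rightCont : ∀ u ∈ Set.Ico (0:ℝ) 1, ContinuousWithinAt D (Set.Icc u 1) u
  zero : D 0 = 0
  sup_one : sSup (D '' Set.Ioo 0 1) = 1

/-- `Q` is the probability measure on the Borel sets of `(0,1)` corresponding to
the distortion function `D`, i.e. `Q (a,b] = D b - D a` for `0 < a ≤ b < 1`. -/
def IsCorresponding (D : ℝ → ℝ) (Q : Measure ℝ) : Prop :=
  IsProbabilityMeasure Q ∧ Q (Set.Ioo (0:ℝ) 1) = 1 ∧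
    ∀ a b : ℝ, 0 < a → a ≤ b → b < 1 → Q (Set.Ioc a b) = ENNReal.ofReal (D b - D a)

/-- `X ∈ 𝓛_Q`, i.e. `∫_{(0,1)} (F^←_X(u))⁺ dQ(u) < ∞`. -/
def memLQ {Ω : Type*} [MeasurableSpace Ω] (P : Measure Ω) (Q : Measure ℝ) (X : Ω → ℝ) : Prop :=
  ∫⁻ u in Set.Ioo (0:ℝ) 1, ENNReal.ofReal (max (quantile P X u) 0) ∂Q < ⊤

/-- The quantile risk measure
`ϱ_Q[X] = ∫_{(0,1)} (F^←_X(u))⁺ dQ(u) - ∫_{(0,1)} (F^←_X(u))⁻ dQ(u)`, with values in `EReal`. -/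
noncomputable def rho {Ω : Type*} [MeasurableSpace Ω] (P : Measure Ω) (Q : Measure ℝ)
    (X : Ω → ℝ) : EReal :=
  ((∫⁻ u in Set.Ioo (0:ℝ) 1, ENNReal.ofReal (max (quantile P X u) 0) ∂Q) : EReal)
    - ((∫⁻ u in Set.Ioo (0:ℝ) 1, ENNReal.ofReal (max (-(quantile P X u)) 0) ∂Q) : EReal)

/-!
On `(0,1)` the quantile function is the lower adjoint of the distribution function:
`F^←(u) ≤ x ↔ u ≤ F(x)`, because `F` is increasing and right-continuous. Hence, as sets of
levels `u ∈ (0,1)`, `{x < F^←} = (F(x), 1)` and `{F^← ≤ x} = (0, F(x)]`, which have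
`Q`-measure `1 - D(F(x))` and `D(F(x))`. The identity is the layer-cake formula for the positive
and negative parts of `F^←` under `Q`.
-/

open Set Filter Topology ProbabilityTheory

theorem StieltjesFunction.sInf_setOf_le_le_iff (f : StieltjesFunction ℝ) {u x : ℝ}
    (hlo : ∃ y, f y < u) (hhi : ∃ y, u ≤ f y) : sInf {y | u ≤ f y} ≤ x ↔ u ≤ f x := by
  obtain ⟨y₀, hy₀⟩ := hlo
  have hbdd : BddBelow {y | u ≤ f y} :=
    ⟨y₀, fun y hy => le_of_not_gt fun h => (hy.trans (f.mono h.le)).not_gt hy₀⟩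
  refine ⟨fun hx => ?_, fun hx => csInf_le hbdd hx⟩
  have hright : ∀ᶠ y in 𝓝[>] x, u ≤ f y := eventually_nhdsWithin_of_forall fun y hy => by
    obtain ⟨z, hz, hzy⟩ := (csInf_lt_iff hbdd hhi).1 (hx.trans_lt hy)
    exact hz.trans (f.mono hzy.le)
  exact ge_of_tendsto ((f.right_continuous x).mono Ioi_subset_Ici_self).tendsto hright

section Quantile

variable {Ω : Type*} [MeasurableSpace Ω] {P : Measure Ω} {X : Ω → ℝ}

theorem distFun_eq_cdf [IsProbabilityMeasure P] (hX : Measurable X) :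
    distFun P X = cdf (P.map X) := by
  have := Measure.isProbabilityMeasure_map (μ := P) hX.aemeasurable
  ext x
  rw [cdf_eq_real, map_measureReal_apply hX measurableSet_Iic]
  rfl

theorem distFun_mem_Icc [IsProbabilityMeasure P] (hX : Measurable X) (x : ℝ) :
    distFun P X x ∈ Icc 0 1 := by
  rw [distFun_eq_cdf hX]
  exact ⟨cdf_nonneg _ x, cdf_le_one _ x⟩

theorem quantile_le_iff [IsProbabilityMeasure P] (hX : Measurable X) {u x : ℝ}
    (hu : u ∈ Ioo 0 1) : quantile P X u ≤ x ↔ u ≤ distFun P X x := by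
  have := Measure.isProbabilityMeasure_map (μ := P) hX.aemeasurable
  rw [quantile, distFun_eq_cdf hX]
  exact (cdf _).sInf_setOf_le_le_iff ((tendsto_cdf_atBot _).eventually (gt_mem_nhds hu.1)).exists
    (((tendsto_cdf_atTop _).eventually (lt_mem_nhds hu.2)).exists.imp fun _ => le_of_lt)

theorem quantile_monotoneOn [IsProbabilityMeasure P] (hX : Measurable X) :
    MonotoneOn (quantile P X) (Ioo 0 1) := fun _ hu _ hv huv =>
  (quantile_le_iff hX hu).2 <| huv.trans <| (quantile_le_iff hX hv).1 le_rfl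

end Quantile

section Distortion

variable {D : ℝ → ℝ} {Q : Measure ℝ}

theorem IsDistortion.apply_one (hD : IsDistortion D) : D 1 = 1 := by
  refine le_antisymm (hD.mapsTo 1 ⟨zero_le_one, le_rfl⟩).2
    (hD.sup_one.symm.trans_le <| csSup_le ⟨D 2⁻¹, 2⁻¹, by norm_num, rfl⟩ ?_)
  rintro _ ⟨u, hu, rfl⟩
  exact hD.mono hu.1.le hu.2.le le_rfl

theorem IsCorresponding.measure_Ioc_zero (hD : IsDistortion D) (hQ : IsCorresponding D Q)
    {a : ℝ} (ha : a ∈ Ioo 0 1) : Q (Ioc 0 a) = ENNReal.ofReal (D a) := by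
  have := hQ.1
  have hsplit : ∀ l ∈ Ioo 0 a, Q (Ioc 0 l) + ENNReal.ofReal (D a - D l) = Q (Ioc 0 a) := by
    intro l hl
    rw [← hQ.2.2 l a hl.1 hl.2.le ha.2, ← measure_union (Ioc_disjoint_Ioc_of_le le_rfl)
      measurableSet_Ioc, Ioc_union_Ioc_eq_Ioc hl.1.le hl.2.le]
  have hQ0 : Tendsto (fun l => Q (Ioc 0 l)) (𝓝[>] 0) (𝓝 0) := by
    have h := tendsto_measure_biInter_gt (μ := Q) (s := fun r => Ioc 0 r) (a := 0)
      (fun _ _ => nullMeasurableSet_Ioc) (fun _ _ _ hij => Ioc_subset_Ioc_right hij)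
      ⟨1, one_pos, measure_ne_top _ _⟩
    have hempty : ⋂ r > (0 : ℝ), Ioc 0 r = ∅ :=
      eq_empty_of_forall_notMem fun x hx => by
        have h₁ := (mem_iInter₂.1 hx 1 one_pos).1
        linarith [(mem_iInter₂.1 hx (x / 2) (half_pos h₁)).2]
    rwa [hempty, measure_empty] at h
  have hD0 : Tendsto D (𝓝[>] 0) (𝓝 0) := by
    simpa only [hD.zero] using
      ((hD.rightCont 0 ⟨le_rfl, one_pos⟩).mono_of_mem_nhdsWithin
        (Icc_mem_nhdsGT one_pos)).tendsto
  have hlim : Tendsto (fun l => Q (Ioc 0 l) + ENNReal.ofReal (D a - D l)) (𝓝[>] 0)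
      (𝓝 (ENNReal.ofReal (D a))) := by
    simpa using hQ0.add ((ENNReal.continuous_ofReal.tendsto _).comp (tendsto_const_nhds.sub hD0))
  exact tendsto_nhds_unique (tendsto_const_nhds.congr' <|
    eventually_of_mem (Ioo_mem_nhdsGT ha.1) fun l hl => (hsplit l hl).symm) hlim

theorem IsCorresponding.restrict_Iic (hD : IsDistortion D) (hQ : IsCorresponding D Q)
    {a : ℝ} (ha : a ∈ Icc 0 1) : Q.restrict (Ioo 0 1) (Iic a) = ENNReal.ofReal (D a) := by
  rw [Measure.restrict_apply measurableSet_Iic]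
  rcases ha.1.eq_or_lt with rfl | ha₀
  · rw [((Iic_disjoint_Ioi le_rfl).mono_right Ioo_subset_Ioi_self).inter_eq, measure_empty,
      hD.zero, ENNReal.ofReal_zero]
  rcases ha.2.eq_or_lt with rfl | ha₁
  · rw [inter_eq_right.2 (Ioo_subset_Ioc_self.trans Ioc_subset_Iic_self), hQ.2.1, hD.apply_one,
      ENNReal.ofReal_one]
  have hIoc : Iic a ∩ Ioo 0 1 = Ioc 0 a := by
    ext x
    simp only [mem_inter_iff, mem_Iic, mem_Ioo, mem_Ioc]
    exact ⟨fun h => ⟨h.2.1, h.1⟩, fun h => ⟨h.2, h.1, h.2.trans_lt ha₁⟩⟩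
  rw [hIoc, hQ.measure_Ioc_zero hD ⟨ha₀, ha₁⟩]

theorem IsCorresponding.restrict_Ioi (hD : IsDistortion D) (hQ : IsCorresponding D Q)
    {a : ℝ} (ha : a ∈ Icc 0 1) : Q.restrict (Ioo 0 1) (Ioi a) = ENNReal.ofReal (1 - D a) := by
  have : IsProbabilityMeasure (Q.restrict (Ioo 0 1)) :=
    ⟨by rw [Measure.restrict_apply_univ, hQ.2.1]⟩
  rw [← compl_Iic, prob_compl_eq_one_sub measurableSet_Iic, hQ.restrict_Iic hD ha,
    ENNReal.ofReal_sub _ (hD.mapsTo a ha).1, ENNReal.ofReal_one]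

end Distortion

theorem setLIntegral_Ioi_comp_neg (g : ℝ → ENNReal) (a : ℝ) :
    ∫⁻ t in Ioi (-a), g (-t) = ∫⁻ t in Iio a, g t := by
  rw [← lintegral_indicator measurableSet_Ioi, ← lintegral_indicator measurableSet_Iio,
    ← lintegral_neg_eq_self]
  congr 1 with t
  simp only [indicator_apply, mem_Ioi, mem_Iio, neg_lt_neg_iff, neg_neg]

section LayerCake

variable {α : Type*} [MeasurableSpace α] {μ : Measure α} {f : α → ℝ}

theorem lintegral_ofReal_eq_lintegral_meas_lt (hf : AEMeasurable f μ) :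
    ∫⁻ a, ENNReal.ofReal (f a) ∂μ = ∫⁻ t in Ioi 0, μ {a | t < f a} := by
  have h := lintegral_eq_lintegral_meas_lt μ (ae_of_all _ fun a => le_max_right (f a) 0)
    (hf.max aemeasurable_const)
  simp only [ENNReal.ofReal_max, ENNReal.ofReal_zero, zero_le, sup_of_le_left] at h
  rw [h]
  refine setLIntegral_congr_fun measurableSet_Ioi fun t (ht : 0 < t) => ?_
  simp only [lt_max_iff, ht.not_gt, or_false]

theorem lintegral_ofReal_neg_eq_lintegral_meas_le (hf : AEMeasurable f μ) :
    ∫⁻ a, ENNReal.ofReal (-f a) ∂μ = ∫⁻ t in Iio 0, μ {a | f a ≤ t} := by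
  have h := lintegral_eq_lintegral_meas_le μ (ae_of_all _ fun a => le_max_right (-f a) 0)
    (hf.neg.max aemeasurable_const)
  simp only [ENNReal.ofReal_max, ENNReal.ofReal_zero, zero_le, sup_of_le_left] at h
  rw [h, ← setLIntegral_Ioi_comp_neg, neg_zero]
  refine setLIntegral_congr_fun measurableSet_Ioi fun t (ht : 0 < t) => ?_
  simp only [le_max_iff, ht.not_ge, or_false, le_neg]

end LayerCake

section QuantileIntegral

variable {Ω : Type*} [MeasurableSpace Ω] {P : Measure Ω} [IsProbabilityMeasure P]
  {X : Ω → ℝ} {D : ℝ → ℝ} {Q : Measure ℝ}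

theorem lintegral_quantile_posPart (hD : IsDistortion D) (hQ : IsCorresponding D Q)
    (hX : Measurable X) :
    ∫⁻ u in Ioo 0 1, ENNReal.ofReal (max (quantile P X u) 0) ∂Q
      = ∫⁻ x in Ioi 0, ENNReal.ofReal (1 - D (distFun P X x)) := by
  simp only [ENNReal.ofReal_max, ENNReal.ofReal_zero, zero_le, sup_of_le_left]
  rw [lintegral_ofReal_eq_lintegral_meas_lt
    (aemeasurable_restrict_of_monotoneOn measurableSet_Ioo (quantile_monotoneOn hX))]
  refine lintegral_congr fun x => ?_
  rw [← hQ.restrict_Ioi hD (distFun_mem_Icc hX x)]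
  exact measure_congr <| (ae_restrict_mem measurableSet_Ioo).mono fun u hu =>
    propext <| not_le.symm.trans <| (quantile_le_iff hX hu).not.trans not_le

theorem lintegral_quantile_negPart (hD : IsDistortion D) (hQ : IsCorresponding D Q)
    (hX : Measurable X) :
    ∫⁻ u in Ioo 0 1, ENNReal.ofReal (max (-quantile P X u) 0) ∂Q
      = ∫⁻ x in Iio 0, ENNReal.ofReal (D (distFun P X x)) := by
  simp only [ENNReal.ofReal_max, ENNReal.ofReal_zero, zero_le, sup_of_le_left]
  rw [lintegral_ofReal_neg_eq_lintegral_meas_le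
    (aemeasurable_restrict_of_monotoneOn measurableSet_Ioo (quantile_monotoneOn hX))]
  refine lintegral_congr fun x => ?_
  rw [← hQ.restrict_Iic hD (distFun_mem_Icc hX x)]
  exact measure_congr <| (ae_restrict_mem measurableSet_Ioo).mono fun u hu =>
    propext <| quantile_le_iff hX hu

end QuantileIntegral

/-- For every `X ∈ 𝓛_Q`, the integral `∫_{(0,∞)} (1 - D(F_X(x))) dλ(x)` is finite and
`ϱ_Q[X] = ∫_{(0,∞)} (1 - D(F_X(x))) dλ(x) - ∫_{(-∞,0)} D(F_X(x)) dλ(x)` in `[-∞,∞)`. -/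
theorem rho_eq_lintegral_distortion {Ω : Type*} [MeasurableSpace Ω]
    (P : Measure Ω) [IsProbabilityMeasure P] (D : ℝ → ℝ) (Q : Measure ℝ)
    (hD : IsDistortion D) (hQ : IsCorresponding D Q)
    (X : Ω → ℝ) (hX : Measurable X) (hXQ : memLQ P Q X) :
    (∫⁻ x in Set.Ioi (0:ℝ), ENNReal.ofReal (1 - D (distFun P X x))) < ⊤ ∧
    rho P Q X
      = ((∫⁻ x in Set.Ioi (0:ℝ), ENNReal.ofReal (1 - D (distFun P X x))) : EReal)
        - ((∫⁻ x in Set.Iio (0:ℝ), ENNReal.ofReal (D (distFun P X x))) : EReal) := by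
  have hpos := lintegral_quantile_posPart (P := P) hD hQ hX
  refine ⟨hpos ▸ hXQ, ?_⟩
  rw [rho, hpos, lintegral_quantile_negPart hD hQ hX]
end

section
/- Let D₁ and D₂ be distortion functions with corresponding probability measures Q₁ and Q₂ on the Borel sets of (0,1). If there exists δ ∈ (0,1) such that D₁(u) ≤ D₂(u) for every u ∈ [δ,1), then 𝓛_{Q₁} ⊆ 𝓛_{Q₂}. -/
open MeasureTheory

/-! The quantile function of `X` is increasing on `(0,1)`, so its positive part is bounded on
`(0,δ]` and has finite `Q₂`-integral there. On `(δ,1)`, `Q (c,1) = 1 - D c` gives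
`Q₂ (c,1) ≤ Q₁ (c,1)` for `c ≥ δ`, hence `Q₂ A ≤ Q₁ A` for every upper subset `A` of `(δ,1)`;
the superlevel sets of an increasing function are such sets, so by the layer-cake formula its
`Q₂`-integral over `(δ,1)` is at most its `Q₁`-integral. -/

open Set Filter Topology ProbabilityTheory

lemma monotoneOn_sInf_setOf_le_cdf (μ : Measure ℝ) :
    MonotoneOn (fun u => sInf {x | u ≤ cdf μ x}) (Ioo 0 1) := by
  intro u hu v hv huv
  obtain ⟨x₀, hx₀⟩ := eventually_atBot.1 ((tendsto_cdf_atBot μ).eventually (gt_mem_nhds hu.1))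
  have hbdd : BddBelow {x | u ≤ cdf μ x} :=
    ⟨x₀, fun x hx => le_of_not_ge fun hxx₀ => (hx₀ x hxx₀).not_ge hx⟩
  have hne : {x | v ≤ cdf μ x}.Nonempty :=
    ((tendsto_cdf_atTop μ).eventually (lt_mem_nhds hv.2)).exists.imp fun _ hx => hx.le
  exact csInf_le_csInf hbdd hne fun x hx => huv.trans hx

section Quantile

variable {Ω : Type*} [MeasurableSpace Ω] {P : Measure Ω} [IsProbabilityMeasure P] {X : Ω → ℝ}

lemma distFun_eq_cdf_map (hX : Measurable X) : distFun P X = cdf (P.map X) := by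
  have := Measure.isProbabilityMeasure_map (μ := P) hX.aemeasurable
  ext x
  rw [cdf_eq_real, measureReal_def, Measure.map_apply hX measurableSet_Iic]
  rfl

lemma monotoneOn_quantile (hX : Measurable X) : MonotoneOn (quantile P X) (Ioo 0 1) := by
  unfold quantile
  rw [distFun_eq_cdf_map hX]
  exact monotoneOn_sInf_setOf_le_cdf _

end Quantile

section StochasticOrder

variable {μ ν : Measure ℝ} [IsFiniteMeasure μ] {a b : ℝ}

lemma measure_Ico_le_of_forall_measure_Ioo_le (h : ∀ c ∈ Ico a b, ν (Ioo c b) ≤ μ (Ioo c b))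
    {c : ℝ} (hc : c ∈ Ioo a b) : ν (Ico c b) ≤ μ (Ico c b) := by
  obtain ⟨r, hr_mono, hr_mem, hr_lim⟩ := exists_seq_strictMono_tendsto' hc.1
  have hIco : Ico c b = ⋂ n, Ioo (r n) b := by
    ext x
    simp only [mem_Ico, mem_iInter, mem_Ioo]
    exact ⟨fun hx n => ⟨(hr_mem n).2.trans_le hx.1, hx.2⟩,
      fun hx => ⟨le_of_tendsto' hr_lim fun n => (hx n).1.le, (hx 0).2⟩⟩
  have hanti : Antitone fun n => Ioo (r n) b := fun m n hmn =>
    Ioo_subset_Ioo_left (hr_mono.monotone hmn)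
  rw [hIco, hanti.measure_iInter (fun _ => measurableSet_Ioo.nullMeasurableSet)
    ⟨0, measure_ne_top μ _⟩]
  exact le_iInf fun n => (measure_mono (iInter_subset _ n)).trans
    (h _ ⟨(hr_mem n).1.le, (hr_mem n).2.trans hc.2⟩)

lemma measure_le_of_forall_measure_Ioo_le (h : ∀ c ∈ Ico a b, ν (Ioo c b) ≤ μ (Ioo c b))
    {A : Set ℝ} (hA : A ⊆ Ioo a b) (hup : ∀ x ∈ A, ∀ y ∈ Ioo a b, x ≤ y → y ∈ A) :
    ν A ≤ μ A := by
  rcases A.eq_empty_or_nonempty with rfl | hne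
  · simp
  have hbdd : BddBelow A := ⟨a, fun x hx => (hA hx).1.le⟩
  have hac : a ≤ sInf A := le_csInf hne fun x hx => (hA hx).1.le
  have hcb : sInf A < b := let ⟨x, hx⟩ := hne; (csInf_le hbdd hx).trans_lt (hA hx).2
  have hIoo : Ioo (sInf A) b ⊆ A := fun y hy =>
    let ⟨x, hxA, hxy⟩ := exists_lt_of_csInf_lt hne hy.1
    hup x hxA y ⟨hac.trans_lt hy.1, hy.2⟩ hxy.le
  have hIco : A ⊆ Ico (sInf A) b := fun x hx => ⟨csInf_le hbdd hx, (hA hx).2⟩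
  by_cases hmem : sInf A ∈ A
  · have hA_eq : A = Ico (sInf A) b := hIco.antisymm fun y hy =>
      hy.1.eq_or_lt.elim (fun h => h ▸ hmem) fun h => hIoo ⟨h, hy.2⟩
    rw [hA_eq]
    exact measure_Ico_le_of_forall_measure_Ioo_le h ⟨(hA hmem).1, hcb⟩
  · have hA_Ioo : A ⊆ Ioo (sInf A) b := fun x hx =>
      ⟨(hIco hx).1.lt_of_ne fun h => hmem (h ▸ hx), (hA hx).2⟩
    have hA_eq : A = Ioo (sInf A) b := hA_Ioo.antisymm hIoo
    rw [hA_eq]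
    exact h _ ⟨hac, hcb⟩

lemma setLIntegral_le_of_forall_measure_Ioo_le (h : ∀ c ∈ Ico a b, ν (Ioo c b) ≤ μ (Ioo c b))
    {g : ℝ → ℝ} (hg : MonotoneOn g (Ioo a b)) (hg0 : ∀ u, 0 ≤ g u) :
    ∫⁻ u in Ioo a b, ENNReal.ofReal (g u) ∂ν ≤ ∫⁻ u in Ioo a b, ENNReal.ofReal (g u) ∂μ := by
  simp_rw [lintegral_eq_lintegral_meas_lt _ (ae_of_all _ hg0)
    (aemeasurable_restrict_of_monotoneOn measurableSet_Ioo hg),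
    Measure.restrict_apply' measurableSet_Ioo]
  refine lintegral_mono fun t => measure_le_of_forall_measure_Ioo_le h inter_subset_right ?_
  rintro x ⟨hx, hxI⟩ y hyI hxy
  exact ⟨lt_of_lt_of_le hx (hg hxI hyI hxy), hyI⟩

lemma setLIntegral_Ioc_lt_top_of_monotoneOn {g : ℝ → ℝ} (hg : MonotoneOn g (Ioc a b)) :
    ∫⁻ u in Ioc a b, ENNReal.ofReal (g u) ∂μ < ⊤ :=
  setLIntegral_lt_top_of_le_nnreal (measure_ne_top μ _)
    ⟨(g b).toNNReal, fun _ hu => ENNReal.ofReal_le_ofReal (hg hu ⟨hu.1.trans_le hu.2, le_rfl⟩ hu.2)⟩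

end StochasticOrder

namespace IsCorresponding

variable {D : ℝ → ℝ} {Q : Measure ℝ}

lemma measure_Ioc_zero_s8 (hD : IsDistortion D) (hQ : IsCorresponding D Q) {c : ℝ}
    (hc : c ∈ Ioo 0 1) : Q (Ioc 0 c) = ENNReal.ofReal (D c) := by
  have := hQ.1
  have hsplit : ∀ r ∈ Ioo 0 c, Q (Ioc 0 r) + ENNReal.ofReal (D c - D r) = Q (Ioc 0 c) :=
    fun r hr => by
      rw [← hQ.2.2 r c hr.1 hr.2.le hc.2,
        ← measure_union (Ioc_disjoint_Ioc_of_le le_rfl) measurableSet_Ioc,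
        Ioc_union_Ioc_eq_Ioc hr.1.le hr.2.le]
  have hQ0 : Tendsto (fun r => Q (Ioc 0 r)) (𝓝[>] 0) (𝓝 0) := by
    have := tendsto_measure_biInter_gt (μ := Q) (s := fun r => Ioc 0 r) (a := 0)
      (fun _ _ => measurableSet_Ioc.nullMeasurableSet)
      (fun _ _ _ hij => Ioc_subset_Ioc_right hij) ⟨1, one_pos, measure_ne_top _ _⟩
    have hempty : ⋂ r > (0:ℝ), Ioc 0 r = ∅ := eq_empty_of_forall_notMem fun x hx => by
      simp only [mem_iInter, mem_Ioc] at hx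
      linarith [(hx (x / 2) (half_pos (hx 1 one_pos).1)).2, (hx 1 one_pos).1]
    rwa [hempty, measure_empty] at this
  have hD0 : Tendsto D (𝓝[>] 0) (𝓝 0) := by
    have := (hD.rightCont 0 ⟨le_rfl, one_pos⟩).mono_left
      (nhdsWithin_le_of_mem (Icc_mem_nhdsGT one_pos))
    rwa [hD.zero] at this
  have hlim : Tendsto (fun r => Q (Ioc 0 r) + ENNReal.ofReal (D c - D r)) (𝓝[>] 0)
      (𝓝 (0 + ENNReal.ofReal (D c - 0))) :=
    hQ0.add ((ENNReal.continuous_ofReal.tendsto _).comp (tendsto_const_nhds.sub hD0))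
  rw [sub_zero, zero_add] at hlim
  exact tendsto_nhds_unique (tendsto_const_nhds.congr'
    (eventually_of_mem (Ioo_mem_nhdsGT hc.1) fun r hr => (hsplit r hr).symm)) hlim

lemma measure_Ioo_one (hD : IsDistortion D) (hQ : IsCorresponding D Q) {c : ℝ}
    (hc : c ∈ Ioo 0 1) : Q (Ioo c 1) = 1 - ENNReal.ofReal (D c) := by
  refine ENNReal.eq_sub_of_add_eq ENNReal.ofReal_ne_top ?_
  rw [← hQ.measure_Ioc_zero_s8 hD hc, add_comm,
    ← measure_union (Ioc_disjoint_Ioi_same.mono_right Ioo_subset_Ioi_self) measurableSet_Ioo,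
    Ioc_union_Ioo_eq_Ioo hc.1.le hc.2, hQ.2.1]

lemma measure_Ioo_one_le_of_le {D₁ D₂ : ℝ → ℝ} {Q₁ Q₂ : Measure ℝ}
    (hD₁ : IsDistortion D₁) (hQ₁ : IsCorresponding D₁ Q₁)
    (hD₂ : IsDistortion D₂) (hQ₂ : IsCorresponding D₂ Q₂) {c : ℝ} (hc : c ∈ Ioo 0 1)
    (hle : D₁ c ≤ D₂ c) : Q₂ (Ioo c 1) ≤ Q₁ (Ioo c 1) := by
  rw [hQ₁.measure_Ioo_one hD₁ hc, hQ₂.measure_Ioo_one hD₂ hc]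
  exact tsub_le_tsub_left (ENNReal.ofReal_le_ofReal hle) 1

end IsCorresponding

/-- If `D₁ ≤ D₂` on `[δ,1)` for some `δ ∈ (0,1)`, then `𝓛_{Q₁} ⊆ 𝓛_{Q₂}`. -/
theorem memLQ_mono_of_le_on_Ico {Ω : Type*} [MeasurableSpace Ω]
    (P : Measure Ω) [IsProbabilityMeasure P]
    (D₁ D₂ : ℝ → ℝ) (Q₁ Q₂ : Measure ℝ)
    (hD₁ : IsDistortion D₁) (hQ₁ : IsCorresponding D₁ Q₁)
    (hD₂ : IsDistortion D₂) (hQ₂ : IsCorresponding D₂ Q₂)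
    (δ : ℝ) (hδ : δ ∈ Set.Ioo (0:ℝ) 1) (hle : ∀ u ∈ Set.Ico δ 1, D₁ u ≤ D₂ u) :
    ∀ X : Ω → ℝ, Measurable X → memLQ P Q₁ X → memLQ P Q₂ X := by
  intro X hX hmem
  have := hQ₁.1
  have := hQ₂.1
  set g : ℝ → ℝ := fun u => max (quantile P X u) 0
  have hg : MonotoneOn g (Ioo 0 1) := fun u hu v hv huv =>
    max_le_max_right 0 (monotoneOn_quantile hX hu hv huv)
  have htail : ∀ c ∈ Ico δ 1, Q₂ (Ioo c 1) ≤ Q₁ (Ioo c 1) := fun c hc =>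
    IsCorresponding.measure_Ioo_one_le_of_le hD₁ hQ₁ hD₂ hQ₂ ⟨hδ.1.trans_le hc.1, hc.2⟩ (hle c hc)
  unfold memLQ at hmem ⊢
  rw [← Ioc_union_Ioo_eq_Ioo hδ.1.le hδ.2,
    lintegral_union measurableSet_Ioo (Ioc_disjoint_Ioi_same.mono_right Ioo_subset_Ioi_self)]
  refine ENNReal.add_lt_top.2 ⟨setLIntegral_Ioc_lt_top_of_monotoneOn
    (hg.mono (Ioc_subset_Ioo_right hδ.2)), ?_⟩
  calc _ ≤ ∫⁻ u in Ioo δ 1, ENNReal.ofReal (g u) ∂Q₁ :=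
        setLIntegral_le_of_forall_measure_Ioo_le htail (hg.mono (Ioo_subset_Ioo_left hδ.1.le))
          fun u => le_max_right _ _
    _ ≤ _ := lintegral_mono_set (Ioo_subset_Ioo_left hδ.1.le)
    _ < ⊤ := hmem
end
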